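/- arXiv:2605.05605 — 2 statements merged into one kernel-verified Lean document; each statement's English description precedes it below -/
import Mathlib

section
/- Let Ψ(θ) = Fπ sin θ − 2F − Rω² + (1/2)fπ² − fθ(π − θ) with parameters satisfying 0 < 4(2F + Rω² − Fπ)/π² < f < 2F/π and f < Fπ/2. Then Ψ(0) < 0, Ψ(π) < 0, and Ψ(π/2) > 0; hence by the intermediate value theorem Ψ has at least one zero in (0, π/2) and at least one zero in (π/2, π). -/
open Real

noncomputable def Psi (F ω R f θ : ℝ) : ℝ :=
  F * π * Real.sin θ - 2*F - R*ω^2 + f*π^2/2 - f*θ*(π - θ)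

section Psi

variable (F ω R f : ℝ)

theorem continuous_Psi : Continuous (Psi F ω R f) := by
  unfold Psi
  fun_prop

theorem Psi_pi_sub (θ : ℝ) : Psi F ω R f (π - θ) = Psi F ω R f θ := by
  simp only [Psi, sin_pi_sub]
  ring

theorem Psi_zero : Psi F ω R f 0 = f * π ^ 2 / 2 - (2 * F + R * ω ^ 2) := by
  simp only [Psi, sin_zero]
  ring

theorem Psi_pi : Psi F ω R f π = Psi F ω R f 0 := by
  simpa using Psi_pi_sub F ω R f 0

theorem Psi_pi_div_two :
    Psi F ω R f (π / 2) = f * π ^ 2 / 4 - (2 * F + R * ω ^ 2 - F * π) := by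
  simp only [Psi, sin_pi_div_two]
  ring

end Psi

theorem psi_two_zeros_general (F ω R f : ℝ)
    (hsc0 : 0 < 4*(2*F + R*ω^2 - F*π)/π^2)
    (hsc : 4*(2*F + R*ω^2 - F*π)/π^2 < f)
    (himp : f < 2*F/π) :
    Psi F ω R f 0 < 0 ∧ Psi F ω R f π < 0 ∧ 0 < Psi F ω R f (π/2) ∧
    (∃ θ ∈ Set.Ioo (0:ℝ) (π/2), Psi F ω R f θ = 0) ∧
    (∃ θ ∈ Set.Ioo (π/2) π, Psi F ω R f θ = 0) := by
  have hπ2 : (0 : ℝ) < π ^ 2 := by positivity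
  have hA : 0 < 2 * F + R * ω ^ 2 - F * π := by
    linarith [(div_pos_iff_of_pos_right hπ2).mp hsc0]
  have hfπ : f * π < 2 * F := (lt_div_iff₀ pi_pos).mp himp
  -- f π² / 2 < F π < 2F + Rω², the first step being `hfπ` scaled by π / 2
  have h0 : Psi F ω R f 0 < 0 := by
    rw [Psi_zero]
    nlinarith [pi_pos]
  have hπ : Psi F ω R f π < 0 := Psi_pi F ω R f ▸ h0
  have hmid : 0 < Psi F ω R f (π / 2) := by
    rw [Psi_pi_div_two]
    linarith [(div_lt_iff₀ hπ2).mp hsc]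
  refine ⟨h0, hπ, hmid, ?_, ?_⟩
  · exact intermediate_value_Ioo (by linarith [pi_pos])
      (continuous_Psi F ω R f).continuousOn ⟨h0, hmid⟩
  · exact intermediate_value_Ioo' (by linarith [pi_pos])
      (continuous_Psi F ω R f).continuousOn ⟨hπ, hmid⟩

/-- In the regime 0 < f_sc < f < 2F/π (with f < Fπ/2 and positive parameters),
Ψ(0) < 0, Ψ(π) < 0, Ψ(π/2) > 0, hence Ψ has at least one zero in (0, π/2)
and at least one zero in (π/2, π). -/
theorem psi_two_zeros (F ω R f : ℝ)
    (hF : 0 < F) (hω : 0 < ω) (hR : 0 < R) (hf : 0 < f)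
    (hsc0 : 0 < 4*(2*F + R*ω^2 - F*π)/π^2)
    (hsc : 4*(2*F + R*ω^2 - F*π)/π^2 < f)
    (himp : f < 2*F/π) (hfF : f < F*π/2) :
    Psi F ω R f 0 < 0 ∧ Psi F ω R f π < 0 ∧ 0 < Psi F ω R f (π/2) ∧
    (∃ θ ∈ Set.Ioo (0:ℝ) (π/2), Psi F ω R f θ = 0) ∧
    (∃ θ ∈ Set.Ioo (π/2) π, Psi F ω R f θ = 0) :=
  psi_two_zeros_general F ω R f hsc0 hsc himp
end

section
/- Suppose E : [0, T₀] → ℝ is nonnegative, differentiable on the complement of a finite set, and satisfies |E'(t)| ≤ (F+f)·√(2E(t)) wherever differentiable, with E continuous. Then √(E(t)) ≤ √(E(0)) + (F+f)·t/√2 for all t ∈ [0, T₀]. -/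
open Set Filter Topology

theorem image_sub_le_mul_sub_of_deriv_le_off_finset {f : ℝ → ℝ} {C : ℝ} (S : Finset ℝ)
    {a b : ℝ} (hab : a ≤ b) (hfc : ContinuousOn f (Icc a b))
    (hfd : ∀ x ∈ Ioo a b, x ∉ S → DifferentiableAt ℝ f x)
    (hf' : ∀ x ∈ Ioo a b, x ∉ S → deriv f x ≤ C) :
    f b - f a ≤ C * (b - a) := by
  classical
  induction S using Finset.induction_on generalizing a b with
  | empty =>
    refine (convex_Icc a b).image_sub_le_mul_sub_of_deriv_le hfc ?_ ?_ a (left_mem_Icc.2 hab) b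
      (right_mem_Icc.2 hab) hab <;> rw [interior_Icc]
    · exact fun x hx => (hfd x hx (Finset.notMem_empty x)).differentiableWithinAt
    · exact fun x hx => hf' x hx (Finset.notMem_empty x)
  | insert s S _ ih =>
    have avoid : ∀ x, x ∉ S → x ≠ s → x ∉ insert s S := by simp_all
    by_cases hs : s ∈ Ioo a b
    · have left := ih hs.1.le (hfc.mono (Icc_subset_Icc_right hs.2.le))
        (fun x hx hxS => hfd x ⟨hx.1, hx.2.trans hs.2⟩ (avoid x hxS hx.2.ne))
        (fun x hx hxS => hf' x ⟨hx.1, hx.2.trans hs.2⟩ (avoid x hxS hx.2.ne))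
      have right := ih hs.2.le (hfc.mono (Icc_subset_Icc_left hs.1.le))
        (fun x hx hxS => hfd x ⟨hs.1.trans hx.1, hx.2⟩ (avoid x hxS hx.1.ne'))
        (fun x hx hxS => hf' x ⟨hs.1.trans hx.1, hx.2⟩ (avoid x hxS hx.1.ne'))
      linarith
    · exact ih hab hfc
        (fun x hx hxS => hfd x hx (avoid x hxS (ne_of_mem_of_not_mem hx hs)))
        (fun x hx hxS => hf' x hx (avoid x hxS (ne_of_mem_of_not_mem hx hs)))

theorem deriv_sqrt_add_le {E : ℝ → ℝ} {t ε K : ℝ} (hK : 0 ≤ K) (hε : 0 < ε) (hE : 0 ≤ E t)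
    (hd : DifferentiableAt ℝ E t) (hb : |deriv E t| ≤ K * √(2 * E t)) :
    deriv (fun s => √(E s + ε)) t ≤ K / √2 := by
  have hpos : 0 < √(E t + ε) := Real.sqrt_pos.2 (by linarith)
  rw [((hd.hasDerivAt.add_const ε).sqrt (by linarith)).deriv]
  calc deriv E t / (2 * √(E t + ε))
      ≤ K * (√2 * √(E t + ε)) / (2 * √(E t + ε)) := by
        gcongr
        refine (le_abs_self _).trans (hb.trans ?_)
        rw [Real.sqrt_mul zero_le_two]
        gcongr
        linarith
    _ = K / √2 := by
        field_simp
        rw [Real.sq_sqrt zero_le_two]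

theorem energy_growth_bound_general (F f T₀ : ℝ) (hF : 0 < F) (hf : 0 < f)
    (E : ℝ → ℝ)
    (hcont : ContinuousOn E (Set.Icc 0 T₀))
    (hnonneg : ∀ t ∈ Set.Icc 0 T₀, 0 ≤ E t)
    (S : Finset ℝ)
    (hdiff : ∀ t ∈ Set.Ioo 0 T₀, t ∉ S → DifferentiableAt ℝ E t)
    (hbound : ∀ t ∈ Set.Ioo 0 T₀, t ∉ S →
      |deriv E t| ≤ (F + f) * Real.sqrt (2 * E t)) :
    ∀ t ∈ Set.Icc 0 T₀,
      Real.sqrt (E t) ≤ Real.sqrt (E 0) + (F + f) * t / Real.sqrt 2 := by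
  intro t ht
  have sub : Ioo 0 t ⊆ Ioo 0 T₀ := Ioo_subset_Ioo_right ht.2
  -- √E need not be differentiable where E vanishes, so we work with √(E + ε).
  have regularized : ∀ ε > 0, √(E t) ≤ √(E 0 + ε) + (F + f) / √2 * t := by
    intro ε hε
    have hmvt := image_sub_le_mul_sub_of_deriv_le_off_finset (f := fun s => √(E s + ε)) S ht.1
      ((hcont.mono (Icc_subset_Icc_right ht.2)).add continuousOn_const).sqrt
      (fun x hx hxS => ((hdiff x (sub hx) hxS).add_const ε).sqrt
        (by linarith [hnonneg x (Ioo_subset_Icc_self (sub hx))]))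
      (fun x hx hxS => deriv_sqrt_add_le (by positivity) hε
        (hnonneg x (Ioo_subset_Icc_self (sub hx))) (hdiff x (sub hx) hxS) (hbound x (sub hx) hxS))
    have : √(E t) ≤ √(E t + ε) := Real.sqrt_le_sqrt (by linarith)
    simp only [sub_zero] at hmvt
    linarith
  have hlim : Tendsto (fun ε => √(E 0 + ε) + (F + f) / √2 * t) (𝓝[>] 0)
      (𝓝 (√(E 0 + 0) + (F + f) / √2 * t)) :=
    ((by fun_prop : Continuous fun ε => √(E 0 + ε) + (F + f) / √2 * t).tendsto 0).mono_left
      nhdsWithin_le_nhds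
  calc √(E t) ≤ √(E 0 + 0) + (F + f) / √2 * t :=
        ge_of_tendsto hlim (eventually_nhdsWithin_of_forall regularized)
    _ = √(E 0) + (F + f) * t / √2 := by rw [add_zero]; ring

/-- Energy bound: if E ≥ 0 is continuous on [0, T₀], differentiable off a
finite set, and satisfies |E'(t)| ≤ (F+f)√(2E(t)) wherever differentiable,
then √(E(t)) ≤ √(E(0)) + (F+f)·t/√2 on [0, T₀]. -/
theorem energy_growth_bound (F f T₀ : ℝ) (hF : 0 < F) (hf : 0 < f)
    (hT : 0 < T₀) (E : ℝ → ℝ)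
    (hcont : ContinuousOn E (Set.Icc 0 T₀))
    (hnonneg : ∀ t ∈ Set.Icc 0 T₀, 0 ≤ E t)
    (S : Finset ℝ)
    (hdiff : ∀ t ∈ Set.Ioo 0 T₀, t ∉ S → DifferentiableAt ℝ E t)
    (hbound : ∀ t ∈ Set.Ioo 0 T₀, t ∉ S →
      |deriv E t| ≤ (F + f) * Real.sqrt (2 * E t)) :
    ∀ t ∈ Set.Icc 0 T₀,
      Real.sqrt (E t) ≤ Real.sqrt (E 0) + (F + f) * t / Real.sqrt 2 :=
  energy_growth_bound_general F f T₀ hF hf E hcont hnonneg S hdiff hbound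
end
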